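/- Let P₁₂ and P₁₃ be the 3×3 permutation matrices of the transpositions (12) and (13). Then P₁₃·F₀·P₁₂ = F₁ and P₁₃·F₁·P₁₂ = F₀. Consequently, for all 3×3 permutation matrices σ, τ₀, τ₁ one has F₀(σP₁₃, P₁₂τ₁, P₁₂τ₀) = F₁(σ,τ₀,τ₁) and F₁(σP₁₃, P₁₂τ₁, P₁₂τ₀) = F₀(σ,τ₀,τ₁), and hence for every n ≥ 1 and every (i₁,…,iₙ) ∈ {0,1}ⁿ, Δ_{(σP₁₃, P₁₂τ₁, P₁₂τ₀)}(i₁,…,iₙ) = Δ_{(σ,τ₀,τ₁)}(1−i₁,…,1−iₙ); in particular the two permutation triples give the same partition of the triangle at every level. -/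
import Mathlib


open Matrix MeasureTheory Filter

noncomputable section

/-- Projection π(a,b,c) = (b/a, c/a). -/
def projPt (v : Fin 3 → ℝ) : ℝ × ℝ := (v 1 / v 0, v 2 / v 0)

def Vmat : Matrix (Fin 3) (Fin 3) ℝ := !![1,1,1; 0,1,1; 0,0,1]

/-- Product V-free part: matrices C_{i₁} ⋯ C_{iₙ}. -/
def prodSeq (C : Fin 2 → Matrix (Fin 3) (Fin 3) ℝ) (i : ℕ → Fin 2) :
    ℕ → Matrix (Fin 3) (Fin 3) ℝ
  | 0 => 1
  | n + 1 => prodSeq C i n * C (i (n + 1))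

/-- The subtriangle: convex hull of the π-images of the columns of V·C_{i₁}⋯C_{iₙ}. -/
def subTri (C : Fin 2 → Matrix (Fin 3) (Fin 3) ℝ) (i : ℕ → Fin 2) (n : ℕ) :
    Set (ℝ × ℝ) :=
  convexHull ℝ (Set.range fun j : Fin 3 => projPt fun k => (Vmat * prodSeq C i n) k j)

/-- The permutation matrix of a permutation of {0,1,2}. -/
def permMat (p : Equiv.Perm (Fin 3)) : Matrix (Fin 3) (Fin 3) ℝ :=
  Matrix.of fun i j => if p j = i then 1 else 0

def F0 : Matrix (Fin 3) (Fin 3) ℝ := !![0,0,1; 1,0,0; 0,1,1]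
def F1 : Matrix (Fin 3) (Fin 3) ℝ := !![1,0,1; 0,1,0; 0,0,1]
def P12 : Matrix (Fin 3) (Fin 3) ℝ := !![0,1,0; 1,0,0; 0,0,1]
def P13 : Matrix (Fin 3) (Fin 3) ℝ := !![0,0,1; 0,1,0; 1,0,0]

/-- The pair of matrices F₀(σ,τ₀,τ₁) = σF₀τ₀, F₁(σ,τ₀,τ₁) = σF₁τ₁. -/
def Ftrip (σ τ0 τ1 : Matrix (Fin 3) (Fin 3) ℝ) : Fin 2 → Matrix (Fin 3) (Fin 3) ℝ :=
  ![σ * F0 * τ0, σ * F1 * τ1]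


lemma matP13F0P12 : P13 * F0 * P12 = F1 := by
  simp [P13, F0, P12, F1, Matrix.mul_fin_three]

lemma matP13F1P12 : P13 * F1 * P12 = F0 := by
  simp [P13, F0, P12, F1, Matrix.mul_fin_three]

lemma Ftrip_swap (σ τ0 τ1 : Matrix (Fin 3) (Fin 3) ℝ) (j : Fin 2) :
    Ftrip (σ * P13) (P12 * τ1) (P12 * τ0) j = Ftrip σ τ0 τ1 (1 - j) := by
  fin_cases j
  · show σ * P13 * F0 * (P12 * τ1) = σ * F1 * τ1
    rw [← matP13F0P12]; simp [mul_assoc]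
  · show σ * P13 * F1 * (P12 * τ0) = σ * F0 * τ0
    rw [← matP13F1P12]; simp [mul_assoc]

lemma prodSeq_swap (σ τ0 τ1 : Matrix (Fin 3) (Fin 3) ℝ) (i : ℕ → Fin 2) (n : ℕ) :
    prodSeq (Ftrip (σ * P13) (P12 * τ1) (P12 * τ0)) i n
      = prodSeq (Ftrip σ τ0 τ1) (fun k => 1 - i k) n := by
  induction n with
  | zero => rfl
  | succ n ih => simp only [prodSeq, ih, Ftrip_swap]

theorem stmt0 :
    P13 * F0 * P12 = F1 ∧ P13 * F1 * P12 = F0 ∧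
    ∀ σ τ0 τ1 : Matrix (Fin 3) (Fin 3) ℝ,
      (∃ p : Equiv.Perm (Fin 3), σ = permMat p) →
      (∃ p : Equiv.Perm (Fin 3), τ0 = permMat p) →
      (∃ p : Equiv.Perm (Fin 3), τ1 = permMat p) →
      Ftrip (σ * P13) (P12 * τ1) (P12 * τ0) 0 = Ftrip σ τ0 τ1 1 ∧
      Ftrip (σ * P13) (P12 * τ1) (P12 * τ0) 1 = Ftrip σ τ0 τ1 0 ∧
      (∀ n : ℕ, 1 ≤ n → ∀ i : ℕ → Fin 2,
        subTri (Ftrip (σ * P13) (P12 * τ1) (P12 * τ0)) i n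
          = subTri (Ftrip σ τ0 τ1) (fun k => 1 - i k) n) ∧
      (∀ n : ℕ, 1 ≤ n →
        {T : Set (ℝ × ℝ) | ∃ i : ℕ → Fin 2,
            T = subTri (Ftrip (σ * P13) (P12 * τ1) (P12 * τ0)) i n}
          = {T : Set (ℝ × ℝ) | ∃ i : ℕ → Fin 2, T = subTri (Ftrip σ τ0 τ1) i n}) := by
  
  refine ⟨matP13F0P12, matP13F1P12, fun σ τ0 τ1 _ _ _ => ?_⟩
  have hsub : ∀ (n : ℕ) (i : ℕ → Fin 2),
      subTri (Ftrip (σ * P13) (P12 * τ1) (P12 * τ0)) i n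
        = subTri (Ftrip σ τ0 τ1) (fun k => 1 - i k) n := by
    intro n i
    unfold subTri
    rw [prodSeq_swap]
  refine ⟨Ftrip_swap σ τ0 τ1 0, Ftrip_swap σ τ0 τ1 1, fun n _ i => hsub n i, fun n _ => ?_⟩
  ext T
  constructor
  · rintro ⟨i, rfl⟩
    exact ⟨fun k => 1 - i k, (hsub n i).symm ▸ rfl⟩
  · rintro ⟨i, rfl⟩
    refine ⟨fun k => 1 - i k, ?_⟩
    rw [hsub]
    have : ∀ j : Fin 2, 1 - (1 - j) = j := by decide
    simp [this]
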